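/- Let h ∈ ℂ[X,Y] be non-zero. If a(X) ∈ ℂ((1/X))* is a non-zero solution of h(X, a(X)) = 0, then there exists a segment S of the right Newton polygon of h with deg a = (|S₁|/|S₂|)·σ(S) and in(h,S)(X, a⁺(X)) = 0. -/

import Mathlib

open scoped Classical

noncomputable section

/-- A (candidate) segment in the plane, given by its two lattice endpoints. -/
structure Seg where
  P : ℕ × ℕ
  Q : ℕ × ℕ

/-- the support of a polynomial in two variables, as a finite set of pairs `(α,β)`. -/
def supp (h : MvPolynomial (Fin 2) ℂ) : Finset (ℕ × ℕ) :=
  h.support.image fun d => (d 0, d 1)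

/-- the coefficient `h_{αβ}` of `X^α Y^β` in `h`. -/
def coeff2 (h : MvPolynomial (Fin 2) ℂ) (p : ℕ × ℕ) : ℂ :=
  MvPolynomial.coeff (Finsupp.single 0 p.1 + Finsupp.single 1 p.2) h

/-- the linear functional whose level lines are parallel to `S`, normalized so that
(for a right-polygon segment, `S.P.2 < S.Q.2`) its gradient points to the right. -/
def lfun (S : Seg) (v : ℕ × ℕ) : ℤ :=
  ((S.Q.2 : ℤ) - S.P.2) * v.1 - ((S.Q.1 : ℤ) - S.P.1) * v.2

/-- the linear functional whose level lines are parallel to `S`, normalized so that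
(for a top-polygon segment, `S.P.1 < S.Q.1`) its gradient points upwards. -/
def gfun (S : Seg) (v : ℕ × ℕ) : ℤ :=
  ((S.Q.1 : ℤ) - S.P.1) * v.2 - ((S.Q.2 : ℤ) - S.P.2) * v.1

/-- `v` lies on the segment with endpoints `S.P` and `S.Q`
(collinear and inside the bounding box). -/
def OnSeg (S : Seg) (v : ℕ × ℕ) : Prop :=
  lfun S v = lfun S S.P ∧
  min S.P.1 S.Q.1 ≤ v.1 ∧ v.1 ≤ max S.P.1 S.Q.1 ∧
  min S.P.2 S.Q.2 ≤ v.2 ∧ v.2 ≤ max S.P.2 S.Q.2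

/-- `S` is a segment (one-dimensional boundary face) of the right Newton polygon of `h`:
its endpoints (ordered by increasing ordinate) are in the support, the whole support lies
weakly to the left of the line through `S` (the supporting line has outward normal with
positive first coordinate), and `S` is a maximal face: every support point on this line has
ordinate between those of the endpoints. Such segments are exactly the boundary faces on
the right of the Newton diagram joining the lines `β = ord_Y h` and `β = deg_Y h`. -/
def RightSeg (h : MvPolynomial (Fin 2) ℂ) (S : Seg) : Prop :=
  S.P ∈ supp h ∧ S.Q ∈ supp h ∧ S.P.2 < S.Q.2 ∧
  (∀ v ∈ supp h, lfun S v ≤ lfun S S.P) ∧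
  (∀ v ∈ supp h, lfun S v = lfun S S.P → S.P.2 ≤ v.2 ∧ v.2 ≤ S.Q.2)

/-- `S` is a segment of the top Newton polygon of `h` (endpoints ordered by increasing
abscissa; the supporting line has outward normal with positive second coordinate). -/
def TopSeg (h : MvPolynomial (Fin 2) ℂ) (S : Seg) : Prop :=
  S.P ∈ supp h ∧ S.Q ∈ supp h ∧ S.P.1 < S.Q.1 ∧
  (∀ v ∈ supp h, gfun S v ≤ gfun S S.P) ∧
  (∀ v ∈ supp h, gfun S v = gfun S S.P → S.P.1 ≤ v.1 ∧ v.1 ≤ S.Q.1)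

/-- `σ(S)` for a right-polygon segment (endpoints ordered by increasing ordinate):
`0` if `S` is vertical, otherwise minus the sign of the slope of `S`. -/
def sigmaR (S : Seg) : ℤ :=
  if S.P.1 = S.Q.1 then 0 else if S.P.1 < S.Q.1 then -1 else 1

/-- `σ(S)` for a top-polygon segment (endpoints ordered by increasing abscissa). -/
def sigmaT (S : Seg) : ℤ :=
  if S.P.2 = S.Q.2 then 0 else if S.P.2 < S.Q.2 then -1 else 1

/-- `|S₁|`, the length of the projection of `S` on the horizontal axis. -/
def len1 (S : Seg) : ℚ := |(S.Q.1 : ℚ) - S.P.1|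

/-- `|S₂|`, the length of the projection of `S` on the vertical axis. -/
def len2 (S : Seg) : ℚ := |(S.Q.2 : ℚ) - S.P.2|

/-- the declivity `(|S₁|/|S₂|)·σ(S)` of a right-polygon segment. -/
def decl (S : Seg) : ℚ := len1 S / len2 S * (sigmaR S : ℚ)

/-- the declivity `(|S₂|/|S₁|)·σ(S)` of a top-polygon segment. -/
def tdecl (S : Seg) : ℚ := len2 S / len1 S * (sigmaT S : ℚ)

/-- `α(S)`: the abscissa of the intersection of the line through `S` with the
horizontal axis. -/
def alphaS (S : Seg) : ℚ := (S.P.1 : ℚ) + (S.P.2 : ℚ) * decl S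

/-- `β(S)`: the ordinate of the intersection of the line through `S` with the
vertical axis. -/
def betaS (S : Seg) : ℚ := (S.P.2 : ℚ) + (S.P.1 : ℚ) * tdecl S

/-- a right-polygon segment is exceptional if it joins the horizontal axis with a
point of the form `(p, 1)`. -/
def RExcep (S : Seg) : Prop := S.P.2 = 0 ∧ S.Q.2 = 1

/-- a top-polygon segment is exceptional if it joins the vertical axis with a
point of the form `(1, q)`. -/
def TExcep (S : Seg) : Prop := S.P.1 = 0 ∧ S.Q.1 = 1

/-- `in(h,S)`: the sum of the monomials of `h` supported on the segment `S`. -/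
def inPoly (h : MvPolynomial (Fin 2) ℂ) (S : Seg) : MvPolynomial (Fin 2) ℂ :=
  ∑ p ∈ (supp h).filter (OnSeg S),
    MvPolynomial.monomial (Finsupp.single 0 p.1 + Finsupp.single 1 p.2) (coeff2 h p)

/-! Laurent–Puiseux series in `1/X` are modelled as Hahn series over `ℚᵒᵈ`:
formal series `∑ a_θ X^θ` with complex coefficients whose rational exponents form a
set that is well-ordered downwards (in particular bounded above); this field contains
`ℂ((1/X))* = ⋃_k ℂ((X^(−1/k)))` and is algebraically closed. -/
abbrev K : Type := HahnSeries ℚᵒᵈ ℂ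

/-- the degree of a Laurent–Puiseux series: its largest exponent. -/
def degLP (a : K) : ℚ := OrderDual.ofDual a.order

/-- `a⁺`, the leading term of a Laurent–Puiseux series. -/
def lead (a : K) : K := HahnSeries.single a.order a.leadingCoeff

/-- `X^θ` as a Laurent–Puiseux series. -/
def XpowQ (θ : ℚ) : K := HahnSeries.single (OrderDual.toDual θ) 1

/-- the substitution `h(X, a(X))` of a Laurent–Puiseux series for `Y` in `h`. -/
def substY (h : MvPolynomial (Fin 2) ℂ) (a : K) : K :=
  ∑ p ∈ supp h,
    (HahnSeries.single (OrderDual.toDual (p.1 : ℚ)) (coeff2 h p) : K) * a ^ p.2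

/-- the substitution `in(h,S)(X, a(X))` of a Laurent–Puiseux series for `Y` in `in(h,S)`. -/
def inSub (h : MvPolynomial (Fin 2) ℂ) (S : Seg) (a : K) : K :=
  ∑ p ∈ (supp h).filter (OnSeg S),
    (HahnSeries.single (OrderDual.toDual (p.1 : ℚ)) (coeff2 h p) : K) * a ^ p.2

/-! Let `d = deg a` and `M` be the largest of the degrees `α + β d` of the terms `X^α a^β` of
`h(X, a)`. The coefficient of `X^M` in `h(X, a) = 0` is `∑ h_{αβ} (lc a)^β` over the support
points on the line `α + β d = M`, so this supporting line of the Newton diagram carries at least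
two such points, with distinct ordinates. The extreme ones span a segment `S` of the right Newton
polygon of declivity `d`, and `in(h,S)(X, a⁺)` is that same vanishing coefficient times `X^M`. -/

namespace HahnSeries

variable {Γ R : Type*} [AddCommGroup Γ] [LinearOrder Γ] [IsOrderedAddMonoid Γ]
  [Semiring R] [NoZeroDivisors R]

theorem leadingCoeff_pow (x : HahnSeries Γ R) (n : ℕ) :
    (x ^ n).leadingCoeff = x.leadingCoeff ^ n := by
  induction n with
  | zero => simp [leadingCoeff_one]
  | succ n ih => rw [pow_succ, leadingCoeff_mul, ih, pow_succ]

theorem coeff_single_mul_pow_of_le (x : HahnSeries Γ R) (b i : Γ) (c : R) (n : ℕ)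
    (hi : i ≤ b + n • x.order) :
    (single b c * x ^ n).coeff i = if i = b + n • x.order then c * x.leadingCoeff ^ n else 0 := by
  rw [← sub_add_cancel i b, coeff_single_mul_add, sub_add_cancel]
  split_ifs with h
  · rw [h, add_sub_cancel_left, ← order_pow, ← leadingCoeff_eq, leadingCoeff_pow]
  · have hlt : i - b < (x ^ n).order := by
      rw [order_pow, sub_lt_iff_lt_add']
      exact lt_of_le_of_ne hi h
    rw [coeff_eq_zero_of_lt_order hlt, mul_zero]

end HahnSeries

/-- The degree in `X` of the term `X^{p.1} a(X)^{p.2}` when `deg a = d`. -/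
def weight (d : ℚ) (p : ℕ × ℕ) : ℚ := p.1 + p.2 * d

lemma mem_supp_iff {h : MvPolynomial (Fin 2) ℂ} {p : ℕ × ℕ} : p ∈ supp h ↔ coeff2 h p ≠ 0 := by
  have hmon : ∀ D : Fin 2 →₀ ℕ, Finsupp.single 0 (D 0) + Finsupp.single 1 (D 1) = D := by
    intro D; ext i; fin_cases i <;> simp
  simp only [supp, Finset.mem_image, coeff2, MvPolynomial.mem_support_iff]
  constructor
  · rintro ⟨D, hD, rfl⟩
    rwa [hmon]
  · intro hp
    exact ⟨_, hp, by simp⟩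

lemma supp_nonempty {h : MvPolynomial (Fin 2) ℂ} (h0 : h ≠ 0) : (supp h).Nonempty :=
  (MvPolynomial.support_nonempty.2 h0).image _

lemma toDual_add_nsmul_toDual (α d : ℚ) (n : ℕ) :
    OrderDual.toDual α + n • OrderDual.toDual d = OrderDual.toDual (α + n * d) := by
  rw [← nsmul_eq_mul]; rfl

section Substitution

variable (h : MvPolynomial (Fin 2) ℂ) (a : K)

lemma coeff_substY_of_weight_le (M : ℚ) (hM : ∀ p ∈ supp h, weight (degLP a) p ≤ M) :
    (substY h a).coeff (OrderDual.toDual M) =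
      ∑ p ∈ (supp h).filter (weight (degLP a) · = M), coeff2 h p * a.leadingCoeff ^ p.2 := by
  have horder : a.order = OrderDual.toDual (degLP a) := rfl
  rw [substY, HahnSeries.coeff_sum, Finset.sum_filter]
  refine Finset.sum_congr rfl fun p hp => ?_
  rw [HahnSeries.coeff_single_mul_pow_of_le, horder, toDual_add_nsmul_toDual]
  · simp only [weight, OrderDual.toDual_inj, eq_comm]
  · rw [horder, toDual_add_nsmul_toDual, OrderDual.toDual_le_toDual]
    exact hM p hp

lemma inSub_lead_of_weight_eq (S : Seg) (M : ℚ)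
    (hS : ∀ p ∈ (supp h).filter (OnSeg S), weight (degLP a) p = M) :
    inSub h S (lead a) = HahnSeries.single (OrderDual.toDual M)
      (∑ p ∈ (supp h).filter (OnSeg S), coeff2 h p * a.leadingCoeff ^ p.2) := by
  refine (Finset.sum_congr rfl fun p hp => ?_).trans
    (map_sum (HahnSeries.single.addMonoidHom (OrderDual.toDual M)) _ _).symm
  rw [lead, HahnSeries.single_pow, HahnSeries.single_mul_single, ← hS p hp]
  rfl

end Substitution

section Geometry

variable {d M : ℚ} {P Q v : ℕ × ℕ}

lemma eq_of_weight_eq_of_snd_eq (hw : weight d P = weight d Q) (h2 : P.2 = Q.2) : P = Q := by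
  have h1 : (P.1 : ℚ) = Q.1 := by simp only [weight, h2] at hw; linarith
  exact Prod.ext (by exact_mod_cast h1) h2

lemma lfun_eq_mul_weight (hP : weight d P = M) (hQ : weight d Q = M) (v : ℕ × ℕ) :
    (lfun ⟨P, Q⟩ v : ℚ) = ((Q.2 : ℚ) - P.2) * weight d v := by
  simp only [weight] at hP hQ ⊢
  simp only [lfun]
  push_cast
  linear_combination (v.2 : ℚ) * (hP - hQ)

lemma len1_mul_sigmaR (S : Seg) : len1 S * sigmaR S = (S.P.1 : ℚ) - S.Q.1 := by
  rw [len1, sigmaR]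
  split_ifs with heq hlt
  · simp [heq]
  · have : (S.P.1 : ℚ) < S.Q.1 := by exact_mod_cast hlt
    rw [abs_of_pos (sub_pos.2 this)]
    push_cast; ring
  · have : (S.Q.1 : ℚ) < S.P.1 := by exact_mod_cast (by omega : S.Q.1 < S.P.1)
    rw [abs_of_neg (sub_neg.2 this)]
    push_cast; ring

lemma decl_eq_of_weight_eq (hw : weight d P = weight d Q) (hlt : P.2 < Q.2) :
    decl ⟨P, Q⟩ = d := by
  have hpos : (0 : ℚ) < Q.2 - P.2 := sub_pos.2 (by exact_mod_cast hlt)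
  rw [decl, div_mul_eq_mul_div, len1_mul_sigmaR, len2, abs_of_pos hpos, div_eq_iff hpos.ne']
  simp only [weight] at hw
  linarith

lemma onSeg_of_weight_eq (hP : weight d P = M) (hQ : weight d Q = M) (hv : weight d v = M)
    (hPv : P.2 ≤ v.2) (hvQ : v.2 ≤ Q.2) : OnSeg ⟨P, Q⟩ v := by
  have hlfun : lfun ⟨P, Q⟩ v = lfun ⟨P, Q⟩ P := by
    have : (lfun ⟨P, Q⟩ v : ℚ) = lfun ⟨P, Q⟩ P := by
      rw [lfun_eq_mul_weight hP hQ, lfun_eq_mul_weight hP hQ, hv, hP]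
    exact_mod_cast this
  have c1 : (P.2 : ℚ) ≤ v.2 := by exact_mod_cast hPv
  have c2 : (v.2 : ℚ) ≤ Q.2 := by exact_mod_cast hvQ
  simp only [weight] at hP hQ hv
  -- the abscissa `M - β d` is monotone in the ordinate `β`
  have hbetween : (P.1 ≤ v.1 ∧ v.1 ≤ Q.1) ∨ (Q.1 ≤ v.1 ∧ v.1 ≤ P.1) := by
    rcases le_total d 0 with hd | hd
    · left
      have h1 : (P.1 : ℚ) ≤ v.1 := by nlinarith [mul_nonneg (sub_nonneg.2 c1) (neg_nonneg.2 hd)]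
      have h2 : (v.1 : ℚ) ≤ Q.1 := by nlinarith [mul_nonneg (sub_nonneg.2 c2) (neg_nonneg.2 hd)]
      exact ⟨by exact_mod_cast h1, by exact_mod_cast h2⟩
    · right
      have h1 : (Q.1 : ℚ) ≤ v.1 := by nlinarith [mul_nonneg (sub_nonneg.2 c2) hd]
      have h2 : (v.1 : ℚ) ≤ P.1 := by nlinarith [mul_nonneg (sub_nonneg.2 c1) hd]
      exact ⟨by exact_mod_cast h1, by exact_mod_cast h2⟩
  refine ⟨hlfun, ?_, ?_, ?_, ?_⟩ <;> simp only [min_le_iff, le_max_iff] <;> omega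

variable (h : MvPolynomial (Fin 2) ℂ)

lemma rightSeg_of_weight_max (hmax : ∀ v ∈ supp h, weight d v ≤ M)
    (hP : P ∈ (supp h).filter (weight d · = M)) (hQ : Q ∈ (supp h).filter (weight d · = M))
    (hlt : P.2 < Q.2) (hext : ∀ v ∈ (supp h).filter (weight d · = M), P.2 ≤ v.2 ∧ v.2 ≤ Q.2) :
    RightSeg h ⟨P, Q⟩ := by
  rw [Finset.mem_filter] at hP hQ
  have hpos : (0 : ℚ) < Q.2 - P.2 := sub_pos.2 (by exact_mod_cast hlt)
  have hlfun := lfun_eq_mul_weight hP.2 hQ.2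
  refine ⟨hP.1, hQ.1, hlt, fun v hv => ?_, fun v hv hveq => hext v ?_⟩
  · have : (lfun ⟨P, Q⟩ v : ℚ) ≤ lfun ⟨P, Q⟩ P := by
      rw [hlfun, hlfun, hP.2]
      exact mul_le_mul_of_nonneg_left (hmax v hv) hpos.le
    exact_mod_cast this
  · have : (lfun ⟨P, Q⟩ v : ℚ) = lfun ⟨P, Q⟩ P := by exact_mod_cast hveq
    rw [hlfun, hlfun, hP.2] at this
    exact Finset.mem_filter.2 ⟨hv, mul_left_cancel₀ hpos.ne' this⟩

lemma filter_onSeg_eq (hP : P ∈ (supp h).filter (weight d · = M))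
    (hQ : Q ∈ (supp h).filter (weight d · = M)) (hlt : P.2 < Q.2)
    (hext : ∀ v ∈ (supp h).filter (weight d · = M), P.2 ≤ v.2 ∧ v.2 ≤ Q.2) :
    (supp h).filter (OnSeg ⟨P, Q⟩) = (supp h).filter (weight d · = M) := by
  rw [Finset.mem_filter] at hP hQ
  have hpos : (0 : ℚ) < Q.2 - P.2 := sub_pos.2 (by exact_mod_cast hlt)
  refine Finset.filter_congr fun v hv => ⟨fun hon => ?_, fun hw => ?_⟩
  · have : (lfun ⟨P, Q⟩ v : ℚ) = lfun ⟨P, Q⟩ P := by exact_mod_cast hon.1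
    rw [lfun_eq_mul_weight hP.2 hQ.2, lfun_eq_mul_weight hP.2 hQ.2, hP.2] at this
    exact mul_left_cancel₀ hpos.ne' this
  · obtain ⟨hPv, hvQ⟩ := hext v (Finset.mem_filter.2 ⟨hv, hw⟩)
    exact onSeg_of_weight_eq hP.2 hQ.2 hw hPv hvQ

end Geometry

/-- Points of a line `weight d · = M` are determined by their ordinate, so if all ordinates
agreed the sum would have a single, nonzero, term. -/
lemma exists_snd_lt_of_sum_eq_zero {α : Type*} [AddCommMonoid α] {d M : ℚ}
    {F : Finset (ℕ × ℕ)} {f : ℕ × ℕ → α} (hF : F.Nonempty) (hw : ∀ p ∈ F, weight d p = M)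
    (hf : ∀ p ∈ F, f p ≠ 0) (hsum : ∑ p ∈ F, f p = 0) :
    ∃ P ∈ F, ∃ Q ∈ F, P.2 < Q.2 ∧ ∀ v ∈ F, P.2 ≤ v.2 ∧ v.2 ≤ Q.2 := by
  obtain ⟨P, hP, hPmin⟩ := F.exists_min_image Prod.snd hF
  obtain ⟨Q, hQ, hQmax⟩ := F.exists_max_image Prod.snd hF
  refine ⟨P, hP, Q, hQ, lt_of_le_of_ne (hPmin Q hQ) fun hPQ => hf P hP ?_,
    fun v hv => ⟨hPmin v hv, hQmax v hv⟩⟩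
  have hsingle : F = {P} := Finset.eq_singleton_iff_unique_mem.2 ⟨hP, fun v hv =>
    eq_of_weight_eq_of_snd_eq ((hw v hv).trans (hw P hP).symm)
      (le_antisymm ((hQmax v hv).trans hPQ.ge) (hPmin v hv))⟩
  rwa [hsingle, Finset.sum_singleton] at hsum

/-- Theorem 6.3(a): if `a(X)` is a non-zero Laurent–Puiseux solution of `h(X,Y) = 0`
(`h ≠ 0`), then there is a segment `S` of the right Newton polygon of `h` with
`deg a = (|S₁|/|S₂|)·σ(S)` and `in(h,S)(X, a⁺(X)) = 0`. -/
theorem stmt13 (h : MvPolynomial (Fin 2) ℂ) (h0 : h ≠ 0) (a : K) (ha : a ≠ 0)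
    (hsol : substY h a = 0) :
    ∃ S : Seg, RightSeg h S ∧ degLP a = decl S ∧ inSub h S (lead a) = 0 := by
  obtain ⟨P0, hP0, hmax⟩ := (supp h).exists_max_image (weight (degLP a)) (supp_nonempty h0)
  generalize hM : weight (degLP a) P0 = M at hmax
  have hsum := coeff_substY_of_weight_le h a M hmax
  rw [hsol, HahnSeries.coeff_zero, eq_comm] at hsum
  have hterm : ∀ p ∈ (supp h).filter (weight (degLP a) · = M),
      coeff2 h p * a.leadingCoeff ^ p.2 ≠ 0 := fun p hp =>
    mul_ne_zero (mem_supp_iff.1 (Finset.mem_filter.1 hp).1)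
      (pow_ne_zero _ (HahnSeries.leadingCoeff_ne_zero.2 ha))
  obtain ⟨P, hP, Q, hQ, hlt, hext⟩ := exists_snd_lt_of_sum_eq_zero
    ⟨P0, Finset.mem_filter.2 ⟨hP0, hM⟩⟩ (fun p hp => (Finset.mem_filter.1 hp).2) hterm hsum
  have hface := filter_onSeg_eq h hP hQ hlt hext
  refine ⟨⟨P, Q⟩, rightSeg_of_weight_max h hmax hP hQ hlt hext,
    (decl_eq_of_weight_eq ((Finset.mem_filter.1 hP).2.trans (Finset.mem_filter.1 hQ).2.symm)
      hlt).symm, ?_⟩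
  rw [inSub_lead_of_weight_eq h a _ M (hface ▸ fun p hp => (Finset.mem_filter.1 hp).2), hface,
    hsum, HahnSeries.single_eq_zero]
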